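/- arXiv:2601.12217 — 4 statements merged into one kernel-verified Lean document; each statement's English description precedes it below -/
import Mathlib

section
/- If A ∈ T_{m,n} is a double B-tensor, then exactly one of the following holds: (a) A is a B-tensor; or (b) there is a unique j_1 ∈ [n] with a_{j_1...j_1} − γ_{j_1}^+(A) = Σ_{(j_2,...,j_m)≠(j_1,...,j_1)} (γ_{j_1}^+(A) − a_{j_1 j_2...j_m}), and for all i_1 ≠ j_1 the strict inequality a_{i_1...i_1} − γ_{i_1}^+(A) > Σ_{(i_2,...,i_m)≠(i_1,...,i_1)} (γ_{i_1}^+(A) − a_{i_1 i_2...i_m}) holds. -/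
open Finset

namespace TensorB

abbrev Tensor (n m : ℕ) := Fin n → (Fin (m-1) → Fin n) → ℝ

/-- The diagonal index tuple `(i,...,i)`. -/
def diag {n m : ℕ} (i : Fin n) : Fin (m-1) → Fin n := fun _ => i

/-- Sum of the `i`-th row of `A`. -/
def rowSum {n m : ℕ} (A : Tensor n m) (i : Fin n) : ℝ :=
  ∑ j : Fin (m-1) → Fin n, A i j

/-- Off-diagonal index tuples of row `i`. -/
def offIdx (n m : ℕ) (i : Fin n) : Finset (Fin (m-1) → Fin n) :=
  Finset.univ.filter (fun j => j ≠ diag i)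

/-- `γ_i^+(A) = max {0, off-diagonal entries of row i}`. -/
def gammaPlus {n m : ℕ} (A : Tensor n m) (i : Fin n) : ℝ :=
  (offIdx n m i).fold max 0 (A i)

/-- B-tensor. -/
def IsBTensor {n m : ℕ} (A : Tensor n m) : Prop :=
  ∀ i : Fin n, 0 < rowSum A i ∧
    ∀ j, j ≠ diag i → A i j < (1 / (n : ℝ) ^ (m - 1)) * rowSum A i

/-- The deficiency sum `Σ_{(i_2,...,i_m)≠(i,...,i)} (γ_i^+(A) − a_{i i_2...i_m})`. -/
def defSum {n m : ℕ} (A : Tensor n m) (i : Fin n) : ℝ :=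
  ∑ j ∈ offIdx n m i, (gammaPlus A i - A i j)

/-- Double B-tensor. -/
def IsDoubleBTensor {n m : ℕ} (A : Tensor n m) : Prop :=
  ∀ i : Fin n,
    gammaPlus A i < A i (diag i) ∧
    defSum A i ≤ A i (diag i) - gammaPlus A i ∧
    ∀ j, j ≠ i →
      defSum A i * defSum A j <
        (A i (diag i) - gammaPlus A i) * (A j (diag j) - gammaPlus A j)

/-- Z-tensor: all off-diagonal entries nonpositive. -/
def IsZTensor {n m : ℕ} (A : Tensor n m) : Prop :=
  ∀ i : Fin n, ∀ j, j ≠ diag i → A i j ≤ 0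

/-- Strictly diagonally dominant tensor. -/
def IsSDD {n m : ℕ} (A : Tensor n m) : Prop :=
  ∀ i : Fin n, ∑ j ∈ offIdx n m i, |A i j| < A i (diag i)

/-- Circulant tensor. -/
def IsCirculant {n m : ℕ} [NeZero n] (A : Tensor n m) : Prop :=
  ∀ (i : Fin n) (j : Fin (m-1) → Fin n), A i j = A (i + 1) (fun l => j l + 1)

/-- Membership in the interval tensor `[L, U]`. -/
def Mem {n m : ℕ} (L U A : Tensor n m) : Prop :=
  ∀ i j, L i j ≤ A i j ∧ A i j ≤ U i j

/-- Entrywise `L ≤ U`, so that `[L,U]` is a genuine interval tensor. -/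
def IntervalValid {n m : ℕ} (L U : Tensor n m) : Prop :=
  ∀ i j, L i j ≤ U i j


variable {n' m' : ℕ}

lemma gammaPlus_nonneg (A : Tensor n' m') (i : Fin n') : 0 ≤ gammaPlus A i := by
  unfold gammaPlus; rw [Finset.le_fold_max]; exact Or.inl le_rfl

lemma le_gammaPlus (A : Tensor n' m') (i : Fin n') {j} (hj : j ∈ offIdx n' m' i) :
    A i j ≤ gammaPlus A i := by
  unfold gammaPlus; rw [Finset.le_fold_max]; exact Or.inr ⟨j, hj, le_rfl⟩

lemma key (A : Tensor n' m') (i : Fin n') :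
    defSum A i < A i (diag i) - gammaPlus A i ↔
    (n' : ℝ) ^ (m'-1) * gammaPlus A i < rowSum A i := by
  have hoff : offIdx n' m' i = Finset.univ.erase (diag i) := Finset.filter_ne' _ _
  have hu : (Finset.univ : Finset (Fin (m'-1) → Fin n')).card = n' ^ (m'-1) := by
    simp [Finset.card_univ]
  have h1 : 1 ≤ n' ^ (m'-1) := by
    rw [← hu]; exact Finset.card_pos.mpr ⟨diag i, Finset.mem_univ _⟩
  have hcard : ((offIdx n' m' i).card : ℝ) + 1 = (n' : ℝ) ^ (m'-1) := by
    rw [hoff, Finset.card_erase_of_mem (Finset.mem_univ _), hu, Nat.cast_sub h1]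
    push_cast; ring
  have hsum : ∑ j ∈ offIdx n' m' i, A i j + A i (diag i) = rowSum A i := by
    rw [hoff]; exact Finset.sum_erase_add _ _ (Finset.mem_univ _)
  unfold defSum
  rw [Finset.sum_sub_distrib, Finset.sum_const, nsmul_eq_mul, ← hcard]
  constructor <;> intro h <;> nlinarith [hsum]

lemma bt_iff (A : Tensor n' m') :
    IsBTensor A ↔ ∀ i, defSum A i < A i (diag i) - gammaPlus A i := by
  constructor
  · intro hB i
    rw [key]
    obtain ⟨hS, hj⟩ := hB i
    have hn : (0:ℝ) < (n' : ℝ) ^ (m'-1) := by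
      have : 0 < n' := i.pos
      positivity
    have hγ : gammaPlus A i < rowSum A i / (n' : ℝ) ^ (m'-1) := by
      unfold gammaPlus
      rw [Finset.fold_max_lt]
      refine ⟨by positivity, fun j hjm => ?_⟩
      have h2 := hj j (by simpa [offIdx] using hjm)
      rw [one_div, inv_mul_eq_div] at h2
      exact h2
    calc (n' : ℝ) ^ (m'-1) * gammaPlus A i
        < (n' : ℝ) ^ (m'-1) * (rowSum A i / (n' : ℝ) ^ (m'-1)) :=
          mul_lt_mul_of_pos_left hγ hn
      _ = rowSum A i := by field_simp
  · intro h i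
    have hi := (key A i).mp (h i)
    have hn : (0:ℝ) < (n' : ℝ) ^ (m'-1) := by
      have : 0 < n' := i.pos
      positivity
    have hγ0 := gammaPlus_nonneg A i
    have hS : 0 < rowSum A i := by nlinarith
    refine ⟨hS, fun j hj => ?_⟩
    have h1 : A i j ≤ gammaPlus A i := le_gammaPlus A i (by simp [offIdx, hj])
    have h2 : gammaPlus A i < (1 / (n' : ℝ) ^ (m'-1)) * rowSum A i := by
      rw [one_div, inv_mul_eq_div, lt_div_iff₀ hn]
      nlinarith
    linarith

theorem stmt6 {n m : ℕ} (A : Tensor n m) (hA : IsDoubleBTensor A) :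
    Xor' (IsBTensor A)
      (∃! j₁ : Fin n,
        A j₁ (diag j₁) - gammaPlus A j₁ = defSum A j₁ ∧
        ∀ i, i ≠ j₁ → defSum A i < A i (diag i) - gammaPlus A i) := by
  by_cases hall : ∀ i, defSum A i < A i (diag i) - gammaPlus A i
  · left
    refine ⟨(bt_iff A).mpr hall, ?_⟩
    rintro ⟨j₁, ⟨heq, -⟩, -⟩
    exact absurd heq (by linarith [hall j₁])
  · right
    push_neg at hall
    obtain ⟨j₁, hj₁⟩ := hall
    have heq : A j₁ (diag j₁) - gammaPlus A j₁ = defSum A j₁ :=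
      le_antisymm hj₁ (hA j₁).2.1
    have hpos : 0 < defSum A j₁ := by
      have := (hA j₁).1; linarith
    have hstrict : ∀ i, i ≠ j₁ → defSum A i < A i (diag i) - gammaPlus A i := by
      intro i hi
      have hp := (hA i).2.2 j₁ (Ne.symm hi)
      rw [heq] at hp
      exact lt_of_mul_lt_mul_right hp hpos.le
    constructor
    · refine ⟨j₁, ⟨heq, hstrict⟩, ?_⟩
      rintro j' ⟨heq', -⟩
      by_contra hne
      exact absurd heq' (by linarith [hstrict j' hne])
    · intro hB
      exact absurd heq (by linarith [((bt_iff A).mp hB) j₁])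


end TensorB
end

section
/- Let A^I = [A̲, A̅] be an interval tensor in T_{m,n}. Then every tensor A with A̲ ≤ A ≤ A̅ (entrywise) is a B-tensor if and only if for each i_1 ∈ [n]: (a) Σ_{i_2,...,i_m∈[n]} a̲_{i_1 i_2...i_m} > 0, and (b) Σ_{(i_2,...,i_m)≠(j_2,...,j_m)} a̲_{i_1 i_2...i_m} > (n^{m-1} − 1) a̅_{i_1 j_2...j_m} for all (j_2,...,j_m) ≠ (i_1,...,i_1). -/
open Finset

namespace TensorB

lemma rowSum_split {n m : ℕ} (A : Tensor n m) (i : Fin n) (jt : Fin (m-1) → Fin n) :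
    rowSum A i = A i jt + ∑ k ∈ Finset.univ.filter (fun k => k ≠ jt), A i k := by
  rw [Finset.filter_ne', rowSum, ← Finset.add_sum_erase _ _ (Finset.mem_univ jt)]

lemma key_iff {n m : ℕ} (hN : (0:ℝ) < (n : ℝ) ^ (m - 1)) (x S : ℝ) :
    x < (1 / (n : ℝ) ^ (m - 1)) * (x + S) ↔ ((n : ℝ) ^ (m - 1) - 1) * x < S := by
  set N := (n : ℝ) ^ (m - 1)
  rw [one_div, ← div_eq_inv_mul, lt_div_iff₀ hN]
  constructor <;> intro h <;> nlinarith [h]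

theorem stmt8 {n m : ℕ} (L U : Tensor n m) (hLU : IntervalValid L U) :
    (∀ A, Mem L U A → IsBTensor A) ↔
      ∀ i : Fin n, 0 < rowSum L i ∧
        ∀ jt, jt ≠ diag i →
          ((n : ℝ) ^ (m - 1) - 1) * U i jt <
            ∑ j ∈ Finset.univ.filter (fun j => j ≠ jt), L i j := by
  constructor
  · intro hB i
    have hn : 0 < n := i.pos
    have hN : (0:ℝ) < (n : ℝ) ^ (m - 1) := by positivity
    refine ⟨(hB L (fun p q => ⟨le_rfl, hLU p q⟩) i).1, ?_⟩
    intro jt hjt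
    set A : Tensor n m := fun p q => if p = i ∧ q = jt then U i jt else L p q with hA
    have hMem : Mem L U A := by
      intro p q
      by_cases h : p = i ∧ q = jt
      · obtain ⟨rfl, rfl⟩ := h
        have hAe : A p q = U p q := by simp [hA]
        rw [hAe]
        exact ⟨hLU p q, le_rfl⟩
      · simp only [hA, if_neg h]
        exact ⟨le_rfl, hLU p q⟩
    have hb := (hB A hMem i).2 jt hjt
    have hAjt : A i jt = U i jt := by simp [hA]
    have hsum : ∑ k ∈ Finset.univ.filter (fun k => k ≠ jt), A i k
        = ∑ k ∈ Finset.univ.filter (fun k => k ≠ jt), L i k := by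
      refine Finset.sum_congr rfl (fun k hk => ?_)
      have hk' : k ≠ jt := (Finset.mem_filter.1 hk).2
      simp [hA, hk']
    rw [rowSum_split A i jt, hAjt, hsum] at hb
    exact (key_iff hN _ _).1 hb
  · intro hcond A hMem i
    have hn : 0 < n := i.pos
    have hN : (0:ℝ) < (n : ℝ) ^ (m - 1) := by positivity
    obtain ⟨hpos, hoff⟩ := hcond i
    constructor
    · have hle : rowSum L i ≤ rowSum A i :=
        Finset.sum_le_sum (fun j _ => (hMem i j).1)
      linarith
    · intro jt hjt
      have h1 : ((n:ℝ)^(m-1) - 1) * A i jt ≤ ((n:ℝ)^(m-1) - 1) * U i jt := by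
        apply mul_le_mul_of_nonneg_left (hMem i jt).2
        have h1n : (1:ℝ) ≤ (n:ℝ) := by exact_mod_cast hn
        have := one_le_pow₀ h1n (n := m - 1)
        linarith
      have h2 : ∑ k ∈ Finset.univ.filter (fun k => k ≠ jt), L i k
          ≤ ∑ k ∈ Finset.univ.filter (fun k => k ≠ jt), A i k :=
        Finset.sum_le_sum (fun k _ => (hMem i k).1)
      rw [rowSum_split A i jt]
      exact (key_iff hN _ _).2 (by linarith [hoff jt hjt])




end TensorB
end

section
/- If A^I = [A̲, A̅] is an interval Z-tensor in T_{m,n} (every member is a Z-tensor), then the following are equivalent: (a) A^I is an interval B-tensor; (b) Σ_{i_2,...,i_m∈[n]} a̲_{i_1 i_2...i_m} > 0 for each i_1; (c) A̲ is strictly diagonally dominant; (d) A̲ is a B-tensor. -/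
open Finset

namespace TensorB

lemma rowSum_eq {n m : ℕ} (A : Tensor n m) (i : Fin n) :
    rowSum A i = A i (diag i) + ∑ j ∈ offIdx n m i, A i j := by
  unfold rowSum offIdx
  rw [Finset.filter_ne', Finset.add_sum_erase _ _ (Finset.mem_univ _)]

lemma mem_offIdx {n m : ℕ} {i : Fin n} {j : Fin (m-1) → Fin n} :
    j ∈ offIdx n m i ↔ j ≠ diag i := by simp [offIdx]

lemma abs_sum_eq {n m : ℕ} {A : Tensor n m} (hA : IsZTensor A) (i : Fin n) :
    ∑ j ∈ offIdx n m i, |A i j| = -∑ j ∈ offIdx n m i, A i j := by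
  rw [← Finset.sum_neg_distrib]
  exact Finset.sum_congr rfl fun j hj => abs_of_nonpos (hA i j (mem_offIdx.mp hj))

theorem stmt12 {n m : ℕ} (L U : Tensor n m) (hLU : IntervalValid L U)
    (hZ : ∀ A, Mem L U A → IsZTensor A) :
    ((∀ A, Mem L U A → IsBTensor A) ↔ ∀ i : Fin n, 0 < rowSum L i) ∧
    ((∀ i : Fin n, 0 < rowSum L i) ↔ IsSDD L) ∧
    (IsSDD L ↔ IsBTensor L) := by
  have hLmem : Mem L U L := fun i j => ⟨le_refl _, hLU i j⟩
  have hLZ : IsZTensor L := hZ L hLmem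
  have hSDD_iff : (∀ i : Fin n, 0 < rowSum L i) ↔ IsSDD L := by
    constructor
    · intro h i
      have h1 := h i
      rw [rowSum_eq] at h1
      rw [abs_sum_eq hLZ]
      linarith
    · intro h i
      have h1 := h i
      rw [abs_sum_eq hLZ] at h1
      rw [rowSum_eq]
      linarith
  have hB_of_rs : ∀ A, Mem L U A → (∀ i : Fin n, 0 < rowSum L i) → IsBTensor A := by
    intro A hA h i
    have hn : (0:ℝ) < (n:ℝ) := by exact_mod_cast i.pos
    have hrs : rowSum L i ≤ rowSum A i :=
      Finset.sum_le_sum (fun j _ => (hA i j).1)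
    have h1 : 0 < rowSum A i := lt_of_lt_of_le (h i) hrs
    refine ⟨h1, fun j hj => ?_⟩
    have hz := hZ A hA i j hj
    have hpos : 0 < (1 / (n : ℝ) ^ (m - 1)) * rowSum A i :=
      mul_pos (by positivity) h1
    linarith
  refine ⟨⟨fun h i => (h L hLmem i).1, fun h A hA => hB_of_rs A hA h⟩, hSDD_iff, ?_⟩
  rw [← hSDD_iff]
  exact ⟨fun h => hB_of_rs L hLmem h, fun h i => (h i).1⟩

end TensorB
end

section
/- If A^I = [A̲, A̅] is an interval B-tensor in T_{m,n}, then for all i_1 ∈ [n]: (a) a̲_{i_1...i_1} > Σ_{(i_2,...,i_m)∈J} |a̲_{i_1 i_2...i_m}|, where J = {(i_2,...,i_m) : a̲_{i_1 i_2...i_m} < 0}; and (b) a̲_{i_1...i_1} > max{|a̅_{i_1 i_2...i_m}|, |a̲_{i_1 i_2...i_m}|} for all (i_2,...,i_m) ≠ (i_1,...,i_1). -/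
open Finset

namespace TensorB

lemma key_s13 {n m : ℕ} (A : Tensor n m) (hA : IsBTensor A) (i : Fin n) :
    (∀ j ∈ offIdx n m i, |A i j| < A i (diag i)) ∧
    (∑ j ∈ Finset.univ.filter (fun j => A i j < 0), |A i j|) < A i (diag i) := by
  set N : ℝ := (n : ℝ) ^ (m - 1) with hN
  have hn : 0 < n := i.pos
  have hNpos : 0 < N := by positivity
  have hcard : (Finset.univ : Finset (Fin (m-1) → Fin n)).card = n ^ (m-1) := by
    simp [Fintype.card_fun]
  have hoff : offIdx n m i = Finset.univ.erase (diag i) := by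
    rw [offIdx, Finset.filter_ne']
  have hsplit : rowSum A i = A i (diag i) + ∑ j ∈ offIdx n m i, A i j := by
    rw [rowSum, hoff, Finset.add_sum_erase _ _ (Finset.mem_univ _)]
  set γ := gammaPlus A i with hγdef
  have hγ0 : 0 ≤ γ := (Finset.le_fold_max _).mpr (Or.inl le_rfl)
  have hγge : ∀ j ∈ offIdx n m i, A i j ≤ γ := fun j hj =>
    (Finset.le_fold_max _).mpr (Or.inr ⟨j, hj, le_rfl⟩)
  have hNγ : N * γ < rowSum A i := by
    have h1 : γ < rowSum A i / N := by
      rw [hγdef, gammaPlus, Finset.fold_max_lt]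
      constructor
      · exact div_pos (hA i).1 hNpos
      · intro j hj
        have := (hA i).2 j (by simpa [offIdx] using hj)
        rw [one_div, inv_mul_eq_div] at this
        exact this
    calc N * γ < N * (rowSum A i / N) := by
          exact mul_lt_mul_of_pos_left h1 hNpos
      _ = rowSum A i := by field_simp
  have hmain : N * γ - ∑ j ∈ offIdx n m i, A i j < A i (diag i) := by linarith [hsplit]
  constructor
  · intro j0 hj0
    have hsplit2 : ∑ j ∈ offIdx n m i, A i j
        = A i j0 + ∑ j ∈ (offIdx n m i).erase j0, A i j :=
      (Finset.add_sum_erase _ _ hj0).symm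
    have h2le : 2 ≤ n ^ (m-1) := by
      rw [← hcard]
      have : ({j0, diag i} : Finset (Fin (m-1) → Fin n)).card = 2 := by
        rw [Finset.card_insert_of_notMem (by simpa [offIdx] using hj0)]
        simp
      rw [← this]
      exact Finset.card_le_card (Finset.subset_univ _)
    have hcard2 : (((offIdx n m i).erase j0).card : ℝ) = N - 2 := by
      rw [Finset.card_erase_of_mem hj0, hoff,
        Finset.card_erase_of_mem (Finset.mem_univ _), hcard]
      have he : n ^ (m-1) - 1 - 1 = n ^ (m-1) - 2 := by omega
      rw [he, Nat.cast_sub h2le]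
      push_cast
      ring
    have hsum_le : ∑ j ∈ (offIdx n m i).erase j0, A i j ≤ (N - 2) * γ := by
      have := Finset.sum_le_card_nsmul ((offIdx n m i).erase j0) (A i) γ
        (fun j hj => hγge j (Finset.mem_of_mem_erase hj))
      rw [nsmul_eq_mul] at this
      rw [← hcard2]
      exact this
    have hγj : A i j0 ≤ γ := hγge j0 hj0
    have : 2 * γ - A i j0 < A i (diag i) := by
      have := hmain
      rw [hsplit2] at this
      nlinarith
    rw [abs_lt]
    constructor <;> linarith
  · set sneg := (offIdx n m i).filter (fun j => A i j < 0) with hsneg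
    set spos := (offIdx n m i).filter (fun j => ¬ A i j < 0) with hspos
    have hsplit3 : ∑ j ∈ offIdx n m i, A i j = (∑ j ∈ sneg, A i j) + ∑ j ∈ spos, A i j :=
      (Finset.sum_filter_add_sum_filter_not _ _ _).symm
    have hpos_le : ∑ j ∈ spos, A i j ≤ N * γ := by
      have h1 := Finset.sum_le_card_nsmul spos (A i) γ
        (fun j hj => hγge j (Finset.mem_of_mem_filter _ hj))
      rw [nsmul_eq_mul] at h1
      have h2 : (spos.card : ℝ) ≤ N := by
        have : spos.card ≤ n ^ (m-1) := by
          rw [← hcard]; exact Finset.card_le_card (Finset.subset_univ _)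
        rw [hN]; exact_mod_cast this
      calc ∑ j ∈ spos, A i j ≤ (spos.card : ℝ) * γ := h1
        _ ≤ N * γ := mul_le_mul_of_nonneg_right h2 hγ0
    have habs : ∑ j ∈ sneg, |A i j| = - ∑ j ∈ sneg, A i j := by
      rw [← Finset.sum_neg_distrib]
      apply Finset.sum_congr rfl
      intro j hj
      exact abs_of_neg (Finset.mem_filter.mp hj).2
    have hlt : ∑ j ∈ sneg, |A i j| < A i (diag i) := by
      rw [habs]; rw [hsplit3] at hmain; linarith
    have hdiagpos : 0 < A i (diag i) := by
      have : 0 ≤ ∑ j ∈ sneg, |A i j| := Finset.sum_nonneg fun j _ => abs_nonneg _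
      linarith
    have hset : Finset.univ.filter (fun j => A i j < 0) = sneg := by
      rw [hsneg, offIdx, Finset.filter_filter]
      apply Finset.filter_congr
      intro j _
      constructor
      · intro h
        refine ⟨fun hd => ?_, h⟩
        rw [hd] at h; linarith
      · exact fun h => h.2
    rw [hset]
    exact hlt

theorem stmt13 {n m : ℕ} (L U : Tensor n m) (hLU : IntervalValid L U)
    (hIB : ∀ A, Mem L U A → IsBTensor A) :
    ∀ i : Fin n,
      (∑ j ∈ Finset.univ.filter (fun j => L i j < 0), |L i j|) < L i (diag i) ∧
      ∀ j, j ≠ diag i → max |U i j| |L i j| < L i (diag i) := by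
  intro i
  classical
  have hLmem : Mem L U L := fun a b => ⟨le_rfl, hLU a b⟩
  have hLkey := key_s13 L (hIB L hLmem) i
  refine ⟨hLkey.2, ?_⟩
  intro j0 hj0
  set A' : Tensor n m := fun a b => if a = i ∧ b = j0 then U i j0 else L a b with hA'
  have hmem : Mem L U A' := by
    intro a b
    by_cases h : a = i ∧ b = j0
    · obtain ⟨h1, h2⟩ := h
      subst h1; subst h2
      have hv : A' a b = U a b := by simp [hA']
      rw [hv]
      exact ⟨hLU a b, le_rfl⟩
    · simp only [hA', if_neg h]
      exact ⟨le_rfl, hLU a b⟩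
  have hAkey := (key_s13 A' (hIB A' hmem) i).1 j0 (by simp [offIdx, hj0])
  have e1 : A' i j0 = U i j0 := by simp [hA']
  have e2 : A' i (diag i) = L i (diag i) := by
    simp [hA', (Ne.symm hj0 : diag i ≠ j0)]
  rw [e1, e2] at hAkey
  exact max_lt hAkey (hLkey.1 j0 (by simp [offIdx, hj0]))

end TensorB
end
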